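/- arXiv:1903.08554 — 4 statements merged into one kernel-verified Lean document; each statement's English description precedes it below -/
import Mathlib

section
/- There exists a universal constant C > 0 such that the following holds. Let N ≥ 1, d > 0, and let X_1, …, X_N ∈ ℝ³ satisfy |X_i − X_j| ≥ d for all i ≠ j. Let x ∈ ℝ³ and let i ∈ {1, …, N} be such that |x − X_i| ≤ |x − X_j| for all j ∈ {1, …, N}. Then ∑_{j ≠ i} 1/|x − X_j| ≤ C N^{2/3} / d. -/
/-!
Every point other than the nearest one, `X i`, is at distance at least `d / 2` from `x`. The
balls of radius `d / 2` around the points are disjoint, so comparing volumes, at most `(6 r / d)³`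
points lie within distance `r` of `x`. Hence if `X j` is the `n`-th closest point to `x`, then
`1 / |x - X j| ≤ 6 / (d n^{1/3})`, and summing over `n` uses `∑_{n ≤ N} n^{-1/3} ≤ 3/2 N^{2/3}`.
-/

open Finset Metric MeasureTheory Module

theorem half_le_dist_of_dist_le_dist {α : Type*} [PseudoMetricSpace α] {x a b : α} {d : ℝ}
    (hab : d ≤ dist a b) (hx : dist x a ≤ dist x b) : d / 2 ≤ dist x b := by
  linarith [dist_triangle_left a b x]

section Packing

variable {E ι : Type*} [NormedAddCommGroup E] [NormedSpace ℝ E] [FiniteDimensional ℝ E]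

theorem card_mul_pow_le_of_pairwise_dist {X : ι → E} {s : Finset ι} {d R : ℝ} {x : E}
    (hd : 0 < d) (hR : 0 ≤ R) (hsep : (s : Set ι).Pairwise fun a b ↦ d ≤ dist (X a) (X b))
    (hs : ∀ j ∈ s, dist x (X j) ≤ R) :
    (#s : ℝ) * (d / 2) ^ finrank ℝ E ≤ (R + d / 2) ^ finrank ℝ E := by
  let _ : MeasurableSpace E := borel E
  have : BorelSpace E := ⟨rfl⟩
  let μ : Measure E := Measure.addHaar
  have hdisj : (s : Set ι).PairwiseDisjoint fun j ↦ ball (X j) (d / 2) :=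
    fun a ha b hb hab ↦ ball_disjoint_ball (by linarith [hsep ha hb hab])
  have hsub : (⋃ j ∈ s, ball (X j) (d / 2)) ⊆ ball x (R + d / 2) := by
    refine Set.iUnion₂_subset fun j hj ↦ ball_subset_ball' ?_
    linarith [hs j hj, dist_comm x (X j)]
  have hvol : ∑ j ∈ s, μ (ball (X j) (d / 2)) ≤ μ (ball x (R + d / 2)) := by
    rw [← measure_biUnion_finset hdisj fun j _ ↦ measurableSet_ball]
    exact measure_mono hsub
  rw [sum_congr rfl fun j _ ↦ μ.addHaar_ball_of_pos (X j) (half_pos hd), sum_const,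
    nsmul_eq_mul, μ.addHaar_ball_of_pos x (by positivity), ← mul_assoc,
    ENNReal.mul_le_mul_iff_left (measure_ball_pos μ _ one_pos).ne' measure_ball_lt_top.ne,
    ← ENNReal.ofReal_natCast, ← ENNReal.ofReal_mul (by positivity),
    ENNReal.ofReal_le_ofReal_iff (by positivity)] at hvol
  exact hvol

theorem card_filter_dist_le_le_pow {X : ι → E} {s : Finset ι} {d : ℝ} {x : E} {j : ι}
    (hd : 0 < d) (hsep : (s : Set ι).Pairwise fun a b ↦ d ≤ dist (X a) (X b))
    (hj : d / 2 ≤ dist x (X j)) :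
    (#{k ∈ s | dist x (X k) ≤ dist x (X j)} : ℝ) ≤ (6 * dist x (X j) / d) ^ finrank ℝ E := by
  have hpack := card_mul_pow_le_of_pairwise_dist (s := {k ∈ s | dist x (X k) ≤ dist x (X j)})
    hd (by linarith) (hsep.mono (coe_subset.2 (filter_subset _ s))) fun k hk ↦ (mem_filter.1 hk).2
  grw [show dist x (X j) + d / 2 ≤ 3 * dist x (X j) by linarith] at hpack
  rwa [show 6 * dist x (X j) / d = 3 * dist x (X j) / (d / 2) by ring, div_pow,
    le_div_iff₀ (by positivity)]

theorem one_div_dist_le_of_separated [Nontrivial E] {X : ι → E} {s : Finset ι} {d : ℝ} {x : E}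
    {j : ι} (hd : 0 < d) (hsep : (s : Set ι).Pairwise fun a b ↦ d ≤ dist (X a) (X b))
    (hjs : j ∈ s) (hj : d / 2 ≤ dist x (X j)) :
    1 / dist x (X j) ≤
      6 / d * (1 / (#{k ∈ s | dist x (X k) ≤ dist x (X j)} : ℝ) ^ (finrank ℝ E : ℝ)⁻¹) := by
  set n : ℝ := ↑(#{k ∈ s | dist x (X k) ≤ dist x (X j)})
  have hn : 0 < n := Nat.cast_pos.2 (card_pos.2 ⟨j, mem_filter.2 ⟨hjs, le_rfl⟩⟩)
  have hroot : n ^ (finrank ℝ E : ℝ)⁻¹ ≤ 6 * dist x (X j) / d := by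
    have h := Real.rpow_le_rpow hn.le (card_filter_dist_le_le_pow hd hsep hj)
      (inv_nonneg.2 (finrank ℝ E).cast_nonneg)
    rwa [Real.pow_rpow_inv_natCast (by positivity) finrank_pos.ne'] at h
  rw [mul_one_div, div_div, div_le_div_iff₀ (by linarith) (by positivity)]
  rw [le_div_iff₀ hd] at hroot
  linarith

end Packing

theorem sum_rank_le {ι α : Type*} [LinearOrder α] (s : Finset ι) (r : ι → α) {g : ℕ → ℝ}
    (hg : AntitoneOn g (Set.Ici 1)) :
    ∑ j ∈ s, g #{k ∈ s | r k ≤ r j} ≤ ∑ k ∈ Icc 1 #s, g k := by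
  classical
  induction s using Finset.induction_on_max_value r with
  | empty => simp
  | insert a s ha hmax ih =>
    have hrank_a : #{k ∈ insert a s | r k ≤ r a} = #s + 1 := by
      rw [filter_true_of_mem fun k hk ↦ ?_, card_insert_of_notMem ha]
      rcases mem_insert.1 hk with rfl | hk
      exacts [le_rfl, hmax k hk]
    have hrank_s : ∀ j ∈ s, g #{k ∈ insert a s | r k ≤ r j} ≤ g #{k ∈ s | r k ≤ r j} := by
      intro j hj
      have one_le_rank : ∀ t : Finset ι, j ∈ t → 1 ≤ #{k ∈ t | r k ≤ r j} :=
        fun t hjt ↦ card_pos.2 ⟨j, mem_filter.2 ⟨hjt, le_rfl⟩⟩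
      exact hg (one_le_rank s hj) (one_le_rank _ (mem_insert_of_mem hj))
        (card_le_card (filter_subset_filter _ (subset_insert a s)))
    calc ∑ j ∈ insert a s, g #{k ∈ insert a s | r k ≤ r j}
        = g (#s + 1) + ∑ j ∈ s, g #{k ∈ insert a s | r k ≤ r j} := by
          rw [sum_insert ha, hrank_a]
      _ ≤ g (#s + 1) + ∑ k ∈ Icc 1 #s, g k := by grw [sum_le_sum hrank_s, ih]
      _ = ∑ k ∈ Icc 1 #(insert a s), g k := by
          rw [card_insert_of_notMem ha, sum_Icc_succ_top (by omega), add_comm]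

theorem sum_Icc_one_div_rpow_one_third_le (n : ℕ) :
    ∑ k ∈ Icc 1 n, 1 / (k : ℝ) ^ (3 : ℝ)⁻¹ ≤ 3 / 2 * (n : ℝ) ^ ((2 : ℝ) / 3) := by
  induction n with
  | zero => simp
  | succ n ih =>
    have cbrt : ∀ m : ℕ, ((m : ℝ) ^ (3 : ℝ)⁻¹) ^ 3 = m ∧
        (m : ℝ) ^ ((2 : ℝ) / 3) = ((m : ℝ) ^ (3 : ℝ)⁻¹) ^ 2 := fun m ↦ by
      simp only [← Real.rpow_natCast, ← Real.rpow_mul m.cast_nonneg]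
      norm_num
    obtain ⟨ha3, ha2⟩ := cbrt (n + 1)
    obtain ⟨hb3, hb2⟩ := cbrt n
    set a := ((n + 1 : ℕ) : ℝ) ^ (3 : ℝ)⁻¹
    set b := (n : ℝ) ^ (3 : ℝ)⁻¹
    have ha : 0 < a := by positivity
    rw [sum_Icc_succ_top (by omega), ha2]
    grw [ih, hb2]
    -- `a³ - b³ = 1` turns the step into `(a - b)² (a + 2b) ≥ 0`
    rw [← sub_nonneg]
    have hstep :
        3 / 2 * a ^ 2 - (3 / 2 * b ^ 2 + 1 / a) = (a - b) ^ 2 * (a + 2 * b) / (2 * a) := by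
      push_cast at ha3 hb3
      field_simp
      linear_combination 2 * ha3 - 2 * hb3
    rw [hstep]
    positivity

theorem sum_inv_dist_le :
    ∃ C : ℝ, 0 < C ∧
      ∀ (N : ℕ), 1 ≤ N → ∀ (d : ℝ), 0 < d →
        ∀ X : Fin N → EuclideanSpace ℝ (Fin 3),
          (∀ i j : Fin N, i ≠ j → d ≤ ‖X i - X j‖) →
          ∀ (x : EuclideanSpace ℝ (Fin 3)) (i : Fin N),
            (∀ j : Fin N, ‖x - X i‖ ≤ ‖x - X j‖) →
            ∑ j ∈ Finset.univ.erase i, 1 / ‖x - X j‖ ≤ C * (N : ℝ) ^ ((2:ℝ)/3) / d := by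
  refine ⟨9, by norm_num, fun N _ d hd X hsep x i hmin ↦ ?_⟩
  simp_rw [← dist_eq_norm] at hsep hmin ⊢
  set s := univ.erase i
  have hsep_s : (s : Set (Fin N)).Pairwise fun a b ↦ d ≤ dist (X a) (X b) :=
    fun a _ b _ hab ↦ hsep a b hab
  have hfar : ∀ j ∈ s, d / 2 ≤ dist x (X j) := fun j hj ↦
    half_le_dist_of_dist_le_dist (hsep i j (ne_of_mem_erase hj).symm) (hmin j)
  have hanti : AntitoneOn (fun k : ℕ ↦ 1 / (k : ℝ) ^ (3 : ℝ)⁻¹) (Set.Ici 1) :=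
    fun a ha b _ hab ↦ one_div_le_one_div_of_le (Real.rpow_pos_of_pos (Nat.cast_pos.2 ha) _)
      (Real.rpow_le_rpow (by positivity) (by exact_mod_cast hab) (by norm_num))
  have hcard : (#s : ℝ) ≤ N := by simp [s]
  calc ∑ j ∈ s, 1 / dist x (X j)
      ≤ ∑ j ∈ s, 6 / d * (1 / (#{k ∈ s | dist x (X k) ≤ dist x (X j)} : ℝ) ^ (3 : ℝ)⁻¹) :=
        sum_le_sum fun j hj ↦ by
          simpa only [finrank_euclideanSpace_fin, Nat.cast_ofNat] using
            one_div_dist_le_of_separated hd hsep_s hj (hfar j hj)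
    _ = 6 / d * ∑ j ∈ s, 1 / (#{k ∈ s | dist x (X k) ≤ dist x (X j)} : ℝ) ^ (3 : ℝ)⁻¹ :=
        (mul_sum ..).symm
    _ ≤ 6 / d * (3 / 2 * (#s : ℝ) ^ ((2 : ℝ) / 3)) := by
        gcongr
        exact (sum_rank_le s _ hanti).trans (sum_Icc_one_div_rpow_one_third_le #s)
    _ ≤ 6 / d * (3 / 2 * (N : ℝ) ^ ((2 : ℝ) / 3)) := by grw [hcard]
    _ = 9 * (N : ℝ) ^ ((2 : ℝ) / 3) / d := by ring
end

section
/- There exists a universal constant C > 0 such that the following holds. Let N ≥ 1, d > 0, and let X_1, …, X_N ∈ ℝ³ satisfy |X_i − X_j| ≥ d for all i ≠ j. Let x ∈ ℝ³ and let i ∈ {1, …, N} be such that |x − X_i| ≤ |x − X_j| for all j ∈ {1, …, N}. Then ∑_{j ≠ i} 1/|x − X_j|² ≤ C N^{1/3} / d². -/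
/-!
Every point `X_j` with `j ≠ i` lies at distance at least `d / 2` from `x`, because `X_i` is
at least as close to `x` and `|X_i - X_j| ≥ d`. If `X_j` is the `k`-th closest of these points
to `x`, the `k` disjoint balls of radius `d / 2` around the `k` closest ones fit into the ball
of radius `2 |x - X_j|` around `x`, so comparing volumes gives `|x - X_j| ≥ k^{1/3} d / 4`.
Hence the sum is at most `(16 / d²) ∑_{k ≤ N} k^{-2/3} ≤ 48 N^{1/3} / d²`.
-/

open Finset Metric MeasureTheory

theorem one_sub_mul_rpow_neg_le_rpow_sub_rpow {p x : ℝ} (hp0 : 0 ≤ p) (hp1 : p ≤ 1)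
    (hx : 0 ≤ x) : (1 - p) * (x + 1) ^ (-p) ≤ (x + 1) ^ (1 - p) - x ^ (1 - p) := by
  have hx1 : 0 < x + 1 := by positivity
  have amgm : x ^ (1 - p) * (x + 1) ^ p ≤ (1 - p) * x + p * (x + 1) :=
    Real.geom_mean_le_arith_mean2_weighted (by linarith) hp0 hx hx1.le (by ring)
  have hcancel : (x + 1) ^ p * (x + 1) ^ (-p) = 1 := by
    rw [← Real.rpow_add hx1, add_neg_cancel, Real.rpow_zero]
  have hsplit : (x + 1) ^ (1 - p) = (x + 1) * (x + 1) ^ (-p) := by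
    rw [sub_eq_add_neg, Real.rpow_add hx1, Real.rpow_one]
  have := mul_le_mul_of_nonneg_right amgm (by positivity : 0 ≤ (x + 1) ^ (-p))
  rw [mul_assoc, hcancel, mul_one] at this
  rw [hsplit]
  linear_combination this

theorem one_sub_mul_sum_range_rpow_neg_le {p : ℝ} (hp0 : 0 ≤ p) (hp1 : p ≤ 1) (n : ℕ) :
    (1 - p) * ∑ k ∈ range n, ((k : ℝ) + 1) ^ (-p) ≤ (n : ℝ) ^ (1 - p) := by
  induction n with
  | zero => simpa using Real.rpow_nonneg le_rfl (1 - p)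
  | succ n ih =>
    rw [sum_range_succ, mul_add, Nat.cast_succ]
    linarith [one_sub_mul_rpow_neg_le_rpow_sub_rpow hp0 hp1 n.cast_nonneg]

theorem card_mul_pow_finrank_le_of_pairwise_le_dist {E ι : Type*} [NormedAddCommGroup E]
    [NormedSpace ℝ E] [FiniteDimensional ℝ E] {t : Finset ι} {Y : ι → E} {x : E} {r R : ℝ}
    (hr : 0 < r) (hR : 0 ≤ R) (hsep : (t : Set ι).Pairwise fun j l => 2 * r ≤ dist (Y j) (Y l))
    (hdist : ∀ j ∈ t, dist (Y j) x ≤ R) :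
    #t * r ^ Module.finrank ℝ E ≤ (R + r) ^ Module.finrank ℝ E := by
  borelize E
  set μ : Measure E := Measure.addHaar
  have hdisj : (t : Set ι).PairwiseDisjoint fun j => ball (Y j) r :=
    hsep.mono' fun j l h => ball_disjoint_ball (by linarith)
  have hsub : (⋃ j ∈ t, ball (Y j) r) ⊆ ball x (R + r) :=
    Set.iUnion₂_subset fun j hj => ball_subset_ball' (by linarith [hdist j hj])
  have hvolume : #t * (ENNReal.ofReal (r ^ Module.finrank ℝ E) * μ (ball 0 1))
      ≤ ENNReal.ofReal ((R + r) ^ Module.finrank ℝ E) * μ (ball 0 1) :=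
    calc #t * (ENNReal.ofReal (r ^ Module.finrank ℝ E) * μ (ball 0 1))
        = ∑ j ∈ t, μ (ball (Y j) r) := by
          simp only [Measure.addHaar_ball_of_pos μ _ hr, sum_const, nsmul_eq_mul]
      _ = μ (⋃ j ∈ t, ball (Y j) r) :=
          (measure_biUnion_finset hdisj fun _ _ => measurableSet_ball).symm
      _ ≤ μ (ball x (R + r)) := measure_mono hsub
      _ = ENNReal.ofReal ((R + r) ^ Module.finrank ℝ E) * μ (ball 0 1) :=
          Measure.addHaar_ball_of_pos μ x (by linarith)
  rwa [← mul_assoc, ENNReal.mul_le_mul_iff_left (measure_ball_pos μ 0 one_pos).ne'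
    measure_ball_lt_top.ne, ← ENNReal.ofReal_natCast, ← ENNReal.ofReal_mul (by positivity),
    ENNReal.ofReal_le_ofReal_iff (by positivity)] at hvolume

def rankIn {ι α : Type*} [LinearOrder α] (s : Finset ι) (r : ι → α) (j : ι) : ℕ :=
  #{l ∈ s | r l ≤ r j}

section rankIn

variable {ι α : Type*} [LinearOrder α]

theorem one_le_rankIn {s : Finset ι} (r : ι → α) {j : ι} (hj : j ∈ s) :
    1 ≤ rankIn s r j :=
  card_pos.2 ⟨j, mem_filter.2 ⟨hj, le_rfl⟩⟩

theorem rankIn_mono {s s' : Finset ι} (h : s ⊆ s') (r : ι → α) (j : ι) :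
    rankIn s r j ≤ rankIn s' r j :=
  card_le_card (filter_subset_filter _ h)

theorem sum_rankIn_le [DecidableEq ι] (s : Finset ι) (r : ι → α) {f : ℕ → ℝ}
    (hf : AntitoneOn f (Set.Ici 1)) :
    ∑ j ∈ s, f (rankIn s r j) ≤ ∑ k ∈ range #s, f (k + 1) := by
  induction s using induction_on_max_value r with
  | empty => simp
  | insert a s ha hmax ih =>
    have hrank_a : rankIn (insert a s) r a = #s + 1 := by
      rw [rankIn, filter_true_of_mem, card_insert_of_notMem ha]
      exact fun l hl => (mem_insert.1 hl).elim (fun h => h ▸ le_rfl) (hmax l)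
    have hrank_s : ∀ j ∈ s, f (rankIn (insert a s) r j) ≤ f (rankIn s r j) := fun j hj =>
      have hmono := rankIn_mono (subset_insert a s) r j
      hf (one_le_rankIn r hj) ((one_le_rankIn r hj).trans hmono) hmono
    calc ∑ j ∈ insert a s, f (rankIn (insert a s) r j)
        = f (#s + 1) + ∑ j ∈ s, f (rankIn (insert a s) r j) := by
          rw [sum_insert ha, hrank_a]
      _ ≤ f (#s + 1) + ∑ k ∈ range #s, f (k + 1) := by
          grw [sum_le_sum hrank_s, ih]
      _ = ∑ k ∈ range #(insert a s), f (k + 1) := by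
          rw [card_insert_of_notMem ha, sum_range_succ, add_comm]

end rankIn

theorem half_le_dist_of_dist_le {E : Type*} [PseudoMetricSpace E] {a b x : E} {d : ℝ}
    (hsep : d ≤ dist a b) (hclosest : dist x a ≤ dist x b) : d / 2 ≤ dist x b := by
  linarith [dist_triangle_left a b x]

theorem one_div_sq_le_rpow_div_sq {a b c : ℝ} (ha : 0 < a) (hc : 0 < c)
    (h : c * a ^ 3 ≤ b ^ 3) : 1 / b ^ 2 ≤ c ^ (-(2 / 3 : ℝ)) / a ^ 2 := by
  have hcube : (c ^ (1 / 3 : ℝ)) ^ 3 = c := by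
    rw [← Real.rpow_natCast, ← Real.rpow_mul hc.le]; norm_num
  have hsq : (c ^ (1 / 3 : ℝ)) ^ 2 = c ^ (2 / 3 : ℝ) := by
    rw [← Real.rpow_natCast, ← Real.rpow_mul hc.le]; norm_num
  have hroot : c ^ (1 / 3 : ℝ) * a ≤ b := by
    rwa [← Odd.pow_le_pow (by decide : Odd 3), mul_pow, hcube]
  have hpos : 0 < c ^ (1 / 3 : ℝ) * a := by positivity
  calc 1 / b ^ 2 ≤ 1 / (c ^ (1 / 3 : ℝ) * a) ^ 2 := by gcongr
    _ = c ^ (-(2 / 3 : ℝ)) / a ^ 2 := by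
      rw [mul_pow, hsq, Real.rpow_neg hc.le]; field_simp

theorem one_div_dist_sq_le_rankIn {ι : Type*} {s : Finset ι}
    {X : ι → EuclideanSpace ℝ (Fin 3)} {x : EuclideanSpace ℝ (Fin 3)} {d : ℝ} (hd : 0 < d)
    (hsep : (s : Set ι).Pairwise fun j l => d ≤ dist (X j) (X l))
    (hfar : ∀ j ∈ s, d / 2 ≤ dist x (X j)) {j : ι} (hj : j ∈ s) :
    1 / dist x (X j) ^ 2 ≤
      16 / d ^ 2 * (rankIn s (fun l => dist x (X l)) j : ℝ) ^ (-(2 / 3 : ℝ)) := by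
  set ρ := fun l => dist x (X l)
  have hpack : (rankIn s ρ j : ℝ) * (d / 2) ^ 3 ≤ (ρ j + d / 2) ^ 3 := by
    have := card_mul_pow_finrank_le_of_pairwise_le_dist (t := {l ∈ s | ρ l ≤ ρ j}) (Y := X)
      (half_pos hd) dist_nonneg ((hsep.mono (filter_subset _ s)).imp fun l m h => by linarith)
      fun l hl => by rw [dist_comm]; exact (mem_filter.1 hl).2
    rwa [finrank_euclideanSpace_fin] at this
  have hcube : (rankIn s ρ j : ℝ) * (d / 4) ^ 3 ≤ ρ j ^ 3 := by
    have hdouble : (ρ j + d / 2) ^ 3 ≤ (2 * ρ j) ^ 3 := by gcongr; linarith [hfar j hj]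
    nlinarith
  have hrank : (0 : ℝ) < rankIn s ρ j := by exact_mod_cast one_le_rankIn ρ hj
  calc 1 / ρ j ^ 2 ≤ (rankIn s ρ j : ℝ) ^ (-(2 / 3 : ℝ)) / (d / 4) ^ 2 :=
        one_div_sq_le_rpow_div_sq (by positivity) hrank hcube
    _ = 16 / d ^ 2 * (rankIn s ρ j : ℝ) ^ (-(2 / 3 : ℝ)) := by ring

theorem sum_inv_dist_sq_le :
    ∃ C : ℝ, 0 < C ∧
      ∀ (N : ℕ), 1 ≤ N → ∀ (d : ℝ), 0 < d →
        ∀ X : Fin N → EuclideanSpace ℝ (Fin 3),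
          (∀ i j : Fin N, i ≠ j → d ≤ ‖X i - X j‖) →
          ∀ (x : EuclideanSpace ℝ (Fin 3)) (i : Fin N),
            (∀ j : Fin N, ‖x - X i‖ ≤ ‖x - X j‖) →
            ∑ j ∈ Finset.univ.erase i, 1 / ‖x - X j‖ ^ 2 ≤ C * (N : ℝ) ^ ((1:ℝ)/3) / d ^ 2 := by
  refine ⟨48, by norm_num, fun N _ d hd X hsep x i hclosest => ?_⟩
  simp_rw [← dist_eq_norm] at hsep hclosest ⊢
  set s := univ.erase i
  have hfar : ∀ j ∈ s, d / 2 ≤ dist x (X j) := fun j hj =>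
    half_le_dist_of_dist_le (hsep i j (ne_of_mem_erase hj).symm) (hclosest j)
  have hantitone : AntitoneOn (fun m : ℕ => (m : ℝ) ^ (-(2 / 3 : ℝ))) (Set.Ici 1) :=
    fun a ha b _ hab =>
      Real.rpow_le_rpow_of_nonpos (by exact_mod_cast ha) (by exact_mod_cast hab) (by norm_num)
  have hsum :
      ∑ k ∈ range #s, ((k : ℝ) + 1) ^ (-(2 / 3 : ℝ)) ≤ 3 * (#s : ℝ) ^ ((1 : ℝ) / 3) := by
    have := one_sub_mul_sum_range_rpow_neg_le (p := 2 / 3) (by norm_num) (by norm_num) #s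
    norm_num at this
    linarith
  calc ∑ j ∈ s, 1 / dist x (X j) ^ 2
      ≤ ∑ j ∈ s, 16 / d ^ 2 * (rankIn s (fun l => dist x (X l)) j : ℝ) ^ (-(2 / 3 : ℝ)) :=
        sum_le_sum fun j hj =>
          one_div_dist_sq_le_rankIn hd (fun j _ l _ hjl => hsep j l hjl) hfar hj
    _ ≤ 16 / d ^ 2 * ∑ k ∈ range #s, ((k : ℝ) + 1) ^ (-(2 / 3 : ℝ)) := by
        rw [← mul_sum]; gcongr; exact_mod_cast sum_rankIn_le s _ hantitone
    _ ≤ 16 / d ^ 2 * (3 * (#s : ℝ) ^ ((1 : ℝ) / 3)) := by gcongr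
    _ ≤ 16 / d ^ 2 * (3 * (N : ℝ) ^ ((1 : ℝ) / 3)) := by gcongr; simpa using card_le_univ s
    _ = 48 * (N : ℝ) ^ ((1 : ℝ) / 3) / d ^ 2 := by ring
end

section
/- Let d > 0 and let X_1, …, X_N ∈ ℝ³ satisfy X_1 = 0, |X_i − X_j| ≥ d for all i ≠ j, and |X_1| ≤ |X_2| ≤ … ≤ |X_N|. Then for every i with 2 ≤ i ≤ N one has |X_i| ≥ (d/4) · i^{1/3}. -/
/-!
Volume packing: the balls of radius `d / 2` around `X_1, …, X_i` are disjoint and, since the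
norms are ordered, lie in the ball of radius `‖X_i‖ + d / 2` about the origin. Hence
`i (d / 2)³ ≤ (‖X_i‖ + d / 2)³`, and `‖X_i‖ = ‖X_i - X_1‖ ≥ d` absorbs the additive `d / 2`.
-/

open MeasureTheory Metric Module

theorem Finset.card_mul_pow_le_of_pairwise_dist_le {E ι : Type*} [NormedAddCommGroup E]
    [NormedSpace ℝ E] [MeasurableSpace E] [BorelSpace E] [FiniteDimensional ℝ E] [Nontrivial E]
    (μ : Measure E) [μ.IsAddHaarMeasure] {s : Finset ι} {x : ι → E} {c : E} {d R : ℝ}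
    (hd : 0 < d) (hsep : (s : Set ι).Pairwise fun i j => d ≤ dist (x i) (x j))
    (hR : ∀ i ∈ s, dist (x i) c ≤ R) (hR0 : 0 ≤ R) :
    s.card * (d / 2) ^ finrank ℝ E ≤ (R + d / 2) ^ finrank ℝ E := by
  set n := finrank ℝ E
  have hdisj : (s : Set ι).PairwiseDisjoint fun i => ball (x i) (d / 2) :=
    fun i hi j hj hij => ball_disjoint_ball (by linarith [hsep hi hj hij])
  have hsub : ⋃ i ∈ s, ball (x i) (d / 2) ⊆ ball c (R + d / 2) :=
    Set.iUnion₂_subset fun i hi => ball_subset_ball' (by linarith [hR i hi])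
  have hunit₀ : μ (ball 0 1) ≠ 0 := (measure_ball_pos μ _ one_pos).ne'
  have hunit_top : μ (ball 0 1) ≠ ⊤ := measure_ball_lt_top.ne
  have hvol : ENNReal.ofReal (s.card * (d / 2) ^ n) * μ (ball 0 1)
      ≤ ENNReal.ofReal ((R + d / 2) ^ n) * μ (ball 0 1) :=
    calc ENNReal.ofReal (s.card * (d / 2) ^ n) * μ (ball 0 1)
        = ∑ i ∈ s, μ (ball (x i) (d / 2)) := by
          simp only [μ.addHaar_ball _ (half_pos hd).le, Finset.sum_const, nsmul_eq_mul,
            ENNReal.ofReal_mul (Nat.cast_nonneg _), ENNReal.ofReal_natCast, mul_assoc, n]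
      _ = μ (⋃ i ∈ s, ball (x i) (d / 2)) :=
          (measure_biUnion_finset hdisj fun _ _ => measurableSet_ball).symm
      _ ≤ μ (ball c (R + d / 2)) := measure_mono hsub
      _ = ENNReal.ofReal ((R + d / 2) ^ n) * μ (ball 0 1) := μ.addHaar_ball _ (by positivity)
  rw [ENNReal.mul_le_mul_iff_left hunit₀ hunit_top] at hvol
  exact (ENNReal.ofReal_le_ofReal_iff (by positivity)).mp hvol

theorem Real.rpow_inv_natCast_mul_le_of_mul_pow_le {a b c : ℝ} {n : ℕ} (hn : n ≠ 0)
    (ha : 0 ≤ a) (hb : 0 ≤ b) (hc : 0 ≤ c) (h : a * b ^ n ≤ c ^ n) : a ^ (n⁻¹ : ℝ) * b ≤ c :=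
  (pow_le_pow_iff_left₀ (by positivity) hc hn).mp <| by
    rwa [mul_pow, Real.rpow_inv_natCast_pow ha hn]

theorem norm_ge_of_separated_ordered (N : ℕ) (d : ℝ) (hd : 0 < d)
    (X : Fin N → EuclideanSpace ℝ (Fin 3))
    (h0 : ∀ i : Fin N, (i : ℕ) = 0 → X i = 0)
    (hsep : ∀ i j : Fin N, i ≠ j → d ≤ ‖X i - X j‖)
    (hmono : ∀ i j : Fin N, i ≤ j → ‖X i‖ ≤ ‖X j‖) :
    ∀ i : Fin N, 1 ≤ (i : ℕ) →
      (d / 4) * (((i : ℕ) + 1 : ℝ)) ^ ((1:ℝ)/3) ≤ ‖X i‖ := by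
  intro i hi
  have hXi : d ≤ ‖X i‖ := by
    simpa [h0 ⟨0, i.pos⟩ rfl] using hsep i ⟨0, i.pos⟩ (Fin.ne_of_val_ne (Nat.one_le_iff_ne_zero.mp hi))
  have hpack : ((i : ℕ) + 1 : ℝ) * (d / 2) ^ 3 ≤ (‖X i‖ + d / 2) ^ 3 := by
    have h := (Finset.Iic i).card_mul_pow_le_of_pairwise_dist_le volume (c := 0) hd
      (fun j _ k _ hjk => (dist_eq_norm (X j) (X k)).symm ▸ hsep j k hjk)
      (fun j hj => by simpa using hmono j i (Finset.mem_Iic.mp hj)) (norm_nonneg _)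
    rwa [finrank_euclideanSpace_fin, Fin.card_Iic, Nat.cast_succ] at h
  have hroot := Real.rpow_inv_natCast_mul_le_of_mul_pow_le three_ne_zero (by positivity)
    (half_pos hd).le (by positivity) hpack
  have hthird : ((1 : ℝ) / 3) = ((3 : ℕ)⁻¹ : ℝ) := by norm_num
  rw [hthird]
  nlinarith [Real.rpow_nonneg (by positivity : (0 : ℝ) ≤ (i : ℕ) + 1) ((3 : ℕ)⁻¹ : ℝ)]
end

section
/- Let ε ∈ ℝ^{3×3} be symmetric with trace zero. Then for every x ∈ ℝ³ with x ≠ 0 and every j ∈ {1,2,3}, one has ∑_{k,i} ε_{ki} ∂_k Φ_{ij}(x) = −(3/(8π)) · x_j (x · ε x) / |x|⁵, where x · ε x = ∑_{k,i} x_k ε_{ki} x_i. -/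
/-!
Differentiating `1/r` and `xᵢxⱼ/r³` gives
`8π ∂ₖΦᵢⱼ(x) = (δᵢₖxⱼ + δⱼₖxᵢ - δᵢⱼxₖ)/r³ - 3xᵢxⱼxₖ/r⁵`.
Contracted against a symmetric `ε`, the last two terms of the first bracket cancel and the first
one leaves `tr ε · xⱼ / r³`, which vanishes for traceless `ε`; only the cubic term survives.
-/

open Finset

/-- The Oseen tensor `Φᵢⱼ(x) = (1/(8π)) (δᵢⱼ/|x| + xᵢxⱼ/|x|³)`. -/
noncomputable def oseen (i j : Fin 3) (x : EuclideanSpace ℝ (Fin 3)) : ℝ :=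
  (1 / (8 * Real.pi)) * ((if i = j then (1:ℝ) else 0) / ‖x‖ + x i * x j / ‖x‖ ^ 3)

open Real RealInnerProductSpace

section NormCalculus

variable {F : Type*} [NormedAddCommGroup F] [InnerProductSpace ℝ F] {x : F}

theorem hasStrictFDerivAt_norm (hx : x ≠ 0) :
    HasStrictFDerivAt (‖·‖) (‖x‖⁻¹ • innerSL ℝ x) x := by
  have hsqrt := (hasStrictDerivAt_sqrt (by positivity : ‖x‖ ^ 2 ≠ 0)).comp_hasStrictFDerivAt x
    (hasStrictFDerivAt_norm_sq x)
  simp only [Function.comp_def, sqrt_sq (norm_nonneg _)] at hsqrt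
  refine hsqrt.congr_fderiv ?_
  ext v
  simp only [smul_apply, coe_innerSL_apply, nsmul_eq_mul, Nat.cast_ofNat, smul_eq_mul]
  field_simp

theorem hasFDerivAt_norm_zpow (hx : x ≠ 0) (n : ℤ) :
    HasFDerivAt (‖·‖ ^ n) ((n * ‖x‖ ^ (n - 2)) • innerSL ℝ x) x := by
  have hr : ‖x‖ ≠ 0 := norm_ne_zero_iff.2 hx
  refine ((hasDerivAt_zpow n ‖x‖ (.inl hr)).comp_hasFDerivAt x
    (hasStrictFDerivAt_norm hx).hasFDerivAt).congr_fderiv ?_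
  rw [smul_smul, mul_assoc, ← zpow_neg_one, ← zpow_add₀ hr]
  ring_nf

end NormCalculus

theorem fderiv_oseen_apply {x : EuclideanSpace ℝ (Fin 3)} (hx : x ≠ 0) (i j : Fin 3)
    (v : EuclideanSpace ℝ (Fin 3)) :
    fderiv ℝ (oseen i j) x v = 1 / (8 * π) *
      ((v i * x j + x i * v j - (if i = j then 1 else 0) * ⟪x, v⟫) / ‖x‖ ^ 3
        - 3 * x i * x j * ⟪x, v⟫ / ‖x‖ ^ 5) := by
  have hcoord (m : Fin 3) : HasFDerivAt (fun y : EuclideanSpace ℝ (Fin 3) => y m)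
      (EuclideanSpace.proj m : EuclideanSpace ℝ (Fin 3) →L[ℝ] ℝ) x :=
    (EuclideanSpace.proj m : EuclideanSpace ℝ (Fin 3) →L[ℝ] ℝ).hasFDerivAt
  have hderiv := (((hasFDerivAt_norm_zpow hx (-1)).const_mul (if i = j then 1 else 0)).fun_add
    (((hcoord i).fun_mul (hcoord j)).fun_mul (hasFDerivAt_norm_zpow hx (-3)))).const_mul
    (1 / (8 * π))
  have hoseen : oseen i j = fun y => 1 / (8 * π) *
      ((if i = j then 1 else 0) * ‖y‖ ^ (-1 : ℤ) + y i * y j * ‖y‖ ^ (-3 : ℤ)) := by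
    funext y
    simp [oseen, div_eq_mul_inv]
  rw [hoseen, hderiv.fderiv]
  generalize (if i = j then (1 : ℝ) else 0) = δ
  simp only [add_apply, smul_apply, coe_innerSL_apply, PiLp.proj_apply, smul_eq_mul, zpow_neg,
    zpow_ofNat]
  push_cast
  field_simp
  ring

theorem Matrix.IsSymm.sum_sum_mul_ite_eq_trace_mul {ι : Type*} [Fintype ι] [DecidableEq ι]
    {ε : Matrix ι ι ℝ} (hε : ε.IsSymm) (x : ι → ℝ) (j : ι) :
    ∑ k, ∑ i, ε k i * ((if i = k then 1 else 0) * x j + x i * (if j = k then 1 else 0)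
      - (if i = j then 1 else 0) * x k) = ε.trace * x j := by
  simp only [mul_sub, mul_add, sum_sub_distrib, sum_add_distrib, ite_mul, mul_ite, one_mul,
    zero_mul, mul_zero]
  simp [sum_ite_eq, sum_ite_eq', Matrix.trace, sum_mul, hε.apply]

theorem sum_sum_mul_fderiv_oseen_single {ε : Matrix (Fin 3) (Fin 3) ℝ} (hε : ε.IsSymm)
    {x : EuclideanSpace ℝ (Fin 3)} (hx : x ≠ 0) (j : Fin 3) :
    ∑ k, ∑ i, ε k i * fderiv ℝ (oseen i j) x (EuclideanSpace.single k 1) =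
      1 / (8 * π) *
        (ε.trace * x j / ‖x‖ ^ 3 - 3 * x j * (∑ k, ∑ i, x k * ε k i * x i) / ‖x‖ ^ 5) := by
  have hterm (k i : Fin 3) : ε k i * fderiv ℝ (oseen i j) x (EuclideanSpace.single k 1) =
      1 / (8 * π) * (ε k i * ((if i = k then 1 else 0) * x j + x i * (if j = k then 1 else 0)
        - (if i = j then 1 else 0) * x k) / ‖x‖ ^ 3 - 3 * x j * (x k * ε k i * x i) / ‖x‖ ^ 5) := by
    rw [fderiv_oseen_apply hx, EuclideanSpace.inner_single_right]
    simp only [PiLp.single_apply, conj_trivial]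
    ring
  simp only [hterm, ← mul_sum, ← sum_div, sum_sub_distrib, hε.sum_sum_mul_ite_eq_trace_mul]

theorem contraction_fderiv_oseen (ε : Matrix (Fin 3) (Fin 3) ℝ)
    (hsym : ε.IsSymm) (htr : Matrix.trace ε = 0)
    (x : EuclideanSpace ℝ (Fin 3)) (hx : x ≠ 0) (j : Fin 3) :
    ∑ k : Fin 3, ∑ i : Fin 3, ε k i * fderiv ℝ (oseen i j) x (EuclideanSpace.single k 1) =
      -(3 / (8 * Real.pi)) * x j * (∑ k : Fin 3, ∑ i : Fin 3, x k * ε k i * x i) / ‖x‖ ^ 5 := by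
  rw [sum_sum_mul_fderiv_oseen_single hsym hx, htr]
  ring
end
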